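/- arXiv:2509.13640 — 2 statements merged into one kernel-verified Lean document; each statement's English description precedes it below -/
import Mathlib

section
/- Let η : [0,∞) × ℝ² → ℝ be C¹ with η_t(t,x) ≠ 0 everywhere, let K : ℝ² → ℝ be C¹ and positive, and let u be a C² solution of u_{tt} − ∇·(K∇u) = 0. Set e(t,x) = ½(u_t² + K|∇u|²). Then pointwise: ∂_t(η e) − ∇·(η u_t K ∇u) + [K/(2(−η_t))]|η_t ∇u − u_t ∇η|² + [1/(2η_t)] u_t² (K|∇η|² − η_t²) = 0. -/
open MeasureTheory Real Set

/-- Divergence of a vector field on `ℝ²`. -/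
noncomputable def div2 (F : EuclideanSpace ℝ (Fin 2) → EuclideanSpace ℝ (Fin 2))
    (x : EuclideanSpace ℝ (Fin 2)) : ℝ :=
  ∑ i : Fin 2, fderiv ℝ F x (EuclideanSpace.single i 1) i

/-!
Expand `∂ₜ(η e)` and `∇·(η uₜ K∇u)` by the product rules `∂ₜ(η e) = ηₜ e + η ∂ₜ e` and
`∇·(f G) = ∇f·G + f ∇·G`. With `uₜₜ = ∇·(K∇u)` and `∂ₜ∇u = ∇uₜ` (symmetry of the second
derivative of the `C²` function `u`), every term carrying `η` itself cancels and only
`ηₜ e - K uₜ ∇η·∇u` survives; completing the square in `ηₜ∇u - uₜ∇η` identifies it with minus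
the two remaining terms.
-/

open ContinuousLinearMap InnerProductSpace Function

noncomputable def timeDeriv {E F : Type*} [NormedAddCommGroup F] [NormedSpace ℝ F]
    (u : ℝ → E → F) (t : ℝ) (x : E) : F :=
  deriv (fun s => u s x) t

section Slices

variable {E F : Type*} [NormedAddCommGroup E] [NormedSpace ℝ E]
  [NormedAddCommGroup F] [NormedSpace ℝ F]

theorem DifferentiableAt.hasDerivAt_slice_fst {f : ℝ × E → F} {t : ℝ} {x : E}
    (hf : DifferentiableAt ℝ f (t, x)) :
    HasDerivAt (fun s => f (s, x)) (fderiv ℝ f (t, x) (1, 0)) t := by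
  simpa [comp_def] using (hf.hasFDerivAt.comp t (hasFDerivAt_prodMk_left t x)).hasDerivAt

theorem DifferentiableAt.hasFDerivAt_slice_snd {f : ℝ × E → F} {t : ℝ} {x : E}
    (hf : DifferentiableAt ℝ f (t, x)) :
    HasFDerivAt (fun y => f (t, y)) ((fderiv ℝ f (t, x)).comp (inr ℝ ℝ E)) x :=
  hf.hasFDerivAt.comp x (hasFDerivAt_prodMk_right t x)

variable {u : ℝ → E → F}

theorem timeDeriv_eq_fderiv_apply (hu : Differentiable ℝ (uncurry u)) (t : ℝ) (x : E) :
    timeDeriv u t x = fderiv ℝ (uncurry u) (t, x) (1, 0) :=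
  (hu (t, x)).hasDerivAt_slice_fst.deriv

theorem hasDerivAt_timeDeriv (hu : Differentiable ℝ (uncurry u)) (t : ℝ) (x : E) :
    HasDerivAt (fun s => u s x) (timeDeriv u t x) t := by
  rw [timeDeriv_eq_fderiv_apply hu]
  exact (hu (t, x)).hasDerivAt_slice_fst

theorem contDiff_timeDeriv {n : WithTop ℕ∞} (hu : ContDiff ℝ (n + 1) (uncurry u)) :
    ContDiff ℝ n (uncurry (timeDeriv u)) := by
  have hU : Differentiable ℝ (uncurry u) := hu.differentiable (by simp)
  have : uncurry (timeDeriv u) = fun p => fderiv ℝ (uncurry u) p (1, 0) :=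
    funext fun p => timeDeriv_eq_fderiv_apply hU p.1 p.2
  rw [this]
  exact (hu.fderiv_right le_rfl).clm_apply contDiff_const

theorem fderiv_timeDeriv (hu : ContDiff ℝ 2 (uncurry u)) (t : ℝ) (x : E) :
    fderiv ℝ (timeDeriv u t) x
      = (fderiv ℝ (fderiv ℝ (uncurry u)) (t, x) (1, 0)).comp (inr ℝ ℝ E) := by
  have hD : Differentiable ℝ (fderiv ℝ (uncurry u)) :=
    (hu.fderiv_right one_add_one_eq_two.le).differentiable one_ne_zero
  have hut : timeDeriv u t = fun y => fderiv ℝ (uncurry u) (t, y) (1, 0) :=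
    funext (timeDeriv_eq_fderiv_apply (hu.differentiable two_ne_zero) t)
  have hfd : HasFDerivAt (fun y => fderiv ℝ (uncurry u) (t, y) (1, 0))
      ((apply ℝ F ((1 : ℝ), (0 : E))).comp
        ((fderiv ℝ (fderiv ℝ (uncurry u)) (t, x)).comp (inr ℝ ℝ E))) x :=
    (apply ℝ F ((1 : ℝ), (0 : E))).hasFDerivAt.comp x (hD (t, x)).hasFDerivAt_slice_snd
  rw [hut, hfd.fderiv]
  ext v
  exact (hu.contDiffAt.isSymmSndFDerivAt (by simp)) (0, v) (1, 0)

end Slices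

section Gradient

variable {E : Type*} [NormedAddCommGroup E] [InnerProductSpace ℝ E] [CompleteSpace E]
  {u : ℝ → E → ℝ}

theorem ContDiff.differentiable_gradient {f : E → ℝ} (hf : ContDiff ℝ 2 f) :
    Differentiable ℝ (gradient f) :=
  ((toDual ℝ E).symm.contDiff.comp (hf.fderiv_right one_add_one_eq_two.le)).differentiable
    one_ne_zero

theorem gradient_eq_toDual_symm_fderiv_comp_inr (hu : Differentiable ℝ (uncurry u))
    (t : ℝ) (x : E) :
    gradient (u t) x = (toDual ℝ E).symm ((fderiv ℝ (uncurry u) (t, x)).comp (inr ℝ ℝ E)) :=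
  congrArg (toDual ℝ E).symm (hu (t, x)).hasFDerivAt_slice_snd.fderiv

theorem hasDerivAt_gradient (hu : ContDiff ℝ 2 (uncurry u)) (t : ℝ) (x : E) :
    HasDerivAt (fun s => gradient (u s) x) (gradient (timeDeriv u t) x) t := by
  have hD : Differentiable ℝ (fderiv ℝ (uncurry u)) :=
    (hu.fderiv_right one_add_one_eq_two.le).differentiable one_ne_zero
  let T : StrongDual ℝ E ≃L[ℝ] E := (toDual ℝ E).symm.toContinuousLinearEquiv
  let Φ : ((ℝ × E) →L[ℝ] ℝ) →L[ℝ] E :=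
    (T : StrongDual ℝ E →L[ℝ] E).comp ((compL ℝ E (ℝ × E) ℝ).flip (inr ℝ ℝ E))
  have hgrad : ∀ s, gradient (u s) x = Φ (fderiv ℝ (uncurry u) (s, x)) :=
    fun s => gradient_eq_toDual_symm_fderiv_comp_inr (hu.differentiable two_ne_zero) s x
  have hgrad_t :
      gradient (timeDeriv u t) x = Φ (fderiv ℝ (fderiv ℝ (uncurry u)) (t, x) (1, 0)) := by
    rw [gradient, fderiv_timeDeriv hu]
    rfl
  have hDt := DifferentiableAt.hasDerivAt_slice_fst (F := (ℝ × E) →L[ℝ] ℝ) (hD (t, x))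
  simp_rw [hgrad, hgrad_t]
  exact Φ.hasFDerivAt.comp_hasDerivAt t hDt

theorem hasDerivAt_energy (hu : ContDiff ℝ 2 (uncurry u)) (k t : ℝ) (x : E) :
    HasDerivAt (fun s => 1 / 2 * (timeDeriv u s x ^ 2 + k * ‖gradient (u s) x‖ ^ 2))
      (timeDeriv u t x * timeDeriv (timeDeriv u) t x
        + k * ⟪gradient (u t) x, gradient (timeDeriv u t) x⟫_ℝ) t := by
  have hut := hasDerivAt_timeDeriv
    ((contDiff_timeDeriv (n := 1) hu).differentiable one_ne_zero) t x
  refine (((hut.fun_pow 2).add ((hasDerivAt_gradient hu t x).norm_sq.const_mul k)).const_mul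
    (1 / 2)).congr_deriv ?_
  ring

end Gradient

theorem div2_smul {f : EuclideanSpace ℝ (Fin 2) → ℝ}
    {G : EuclideanSpace ℝ (Fin 2) → EuclideanSpace ℝ (Fin 2)} {x : EuclideanSpace ℝ (Fin 2)}
    (hf : DifferentiableAt ℝ f x) (hG : DifferentiableAt ℝ G x) :
    div2 (fun y => f y • G y) x = fderiv ℝ f x (G x) + f x * div2 G x := by
  conv_rhs => rw [← (EuclideanSpace.basisFun (Fin 2) ℝ).sum_repr (G x)]
  simp only [div2, fderiv_fun_smul hf hG, add_apply, smul_apply, smulRight_apply, PiLp.add_apply,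
    PiLp.smul_apply, smul_eq_mul, mul_comm, Fin.sum_univ_two, EuclideanSpace.basisFun_repr,
    EuclideanSpace.basisFun_apply, map_add, map_smul]
  ring

theorem energy_flux_completing_square {E : Type*} [NormedAddCommGroup E] [InnerProductSpace ℝ E]
    (k a b : ℝ) (g h : E) (hb : b ≠ 0) :
    b * (1 / 2 * (a ^ 2 + k * ‖g‖ ^ 2)) - k * a * ⟪h, g⟫_ℝ
      + k / (2 * -b) * ‖b • g - a • h‖ ^ 2 + 1 / (2 * b) * a ^ 2 * (k * ‖h‖ ^ 2 - b ^ 2) = 0 := by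
  rw [norm_sub_sq_real, norm_smul, norm_smul, real_inner_smul_left, real_inner_smul_right,
    mul_pow, mul_pow, Real.norm_eq_abs, Real.norm_eq_abs, sq_abs, sq_abs, real_inner_comm h g]
  field_simp
  ring

theorem stmt_9_general
    (K : EuclideanSpace ℝ (Fin 2) → ℝ) (hK : ContDiff ℝ 1 K)
    (η u : ℝ → EuclideanSpace ℝ (Fin 2) → ℝ)
    (hη : ContDiff ℝ 1 (fun p : ℝ × EuclideanSpace ℝ (Fin 2) => η p.1 p.2))
    (hu : ContDiff ℝ 2 (fun p : ℝ × EuclideanSpace ℝ (Fin 2) => u p.1 p.2))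
    (ut ηt : ℝ → EuclideanSpace ℝ (Fin 2) → ℝ)
    (hut : ∀ t x, ut t x = deriv (fun s => u s x) t)
    (hηt : ∀ t x, ηt t x = deriv (fun s => η s x) t)
    (hηt0 : ∀ t x, ηt t x ≠ 0)
    (e : ℝ → EuclideanSpace ℝ (Fin 2) → ℝ)
    (he : ∀ t x, e t x = (1 / 2) * ((ut t x) ^ 2 + K x * ‖gradient (u t) x‖ ^ 2))
    (hPDE : ∀ t x, deriv (fun s => ut s x) t
      = div2 (fun y => K y • gradient (u t) y) x) :
    ∀ t x,
      deriv (fun s => η s x * e s x) t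
        - div2 (fun y => (η t y * ut t y) • (K y • gradient (u t) y)) x
        + (K x / (2 * (-(ηt t x))))
            * ‖(ηt t x) • gradient (u t) x - (ut t x) • gradient (η t) x‖ ^ 2
        + (1 / (2 * ηt t x)) * (ut t x) ^ 2
            * (K x * ‖gradient (η t) x‖ ^ 2 - (ηt t x) ^ 2) = 0 := by
  obtain rfl : ut = timeDeriv u := funext₂ hut
  obtain rfl : ηt = timeDeriv η := funext₂ hηt
  obtain rfl : e = fun t x => 1 / 2 * (timeDeriv u t x ^ 2 + K x * ‖gradient (u t) x‖ ^ 2) :=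
    funext₂ he
  intro t x
  have hη₁ : Differentiable ℝ (uncurry η) := hη.differentiable one_ne_zero
  have hut₁ : Differentiable ℝ (uncurry (timeDeriv u)) :=
    (contDiff_timeDeriv (n := 1) hu).differentiable one_ne_zero
  have hdη : DifferentiableAt ℝ (η t) x := (hη₁ (t, x)).hasFDerivAt_slice_snd.differentiableAt
  have hdut : DifferentiableAt ℝ (timeDeriv u t) x :=
    (hut₁ (t, x)).hasFDerivAt_slice_snd.differentiableAt
  have hdG : DifferentiableAt ℝ (fun y => K y • gradient (u t) y) x :=
    (hK.differentiable one_ne_zero x).smul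
      ((hu.comp (contDiff_const.prodMk contDiff_id)).differentiable_gradient x)
  have hdt := (hasDerivAt_timeDeriv hη₁ t x).fun_mul (hasDerivAt_energy hu (K x) t x)
  have hutt : timeDeriv (timeDeriv u) t x = div2 (fun y => K y • gradient (u t) y) x := hPDE t x
  beta_reduce
  rw [hdt.deriv, hutt, div2_smul (hdη.fun_mul hdut) hdG, fderiv_fun_mul hdη hdut]
  simp only [add_apply, smul_apply, map_smul, ← inner_gradient_left, smul_eq_mul]
  rw [real_inner_comm (gradient (u t) x)]
  linear_combination energy_flux_completing_square (K x) (timeDeriv u t x) (timeDeriv η t x)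
    (gradient (u t) x) (gradient (η t) x) (hηt0 t x)

/-- the Todorova–Yordanov pointwise weighted energy identity. -/
theorem stmt_9
    (K : EuclideanSpace ℝ (Fin 2) → ℝ) (hK : ContDiff ℝ 1 K) (hKpos : ∀ x, 0 < K x)
    (η u : ℝ → EuclideanSpace ℝ (Fin 2) → ℝ)
    (hη : ContDiff ℝ 1 (fun p : ℝ × EuclideanSpace ℝ (Fin 2) => η p.1 p.2))
    (hu : ContDiff ℝ 2 (fun p : ℝ × EuclideanSpace ℝ (Fin 2) => u p.1 p.2))
    (ut ηt : ℝ → EuclideanSpace ℝ (Fin 2) → ℝ)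
    (hut : ∀ t x, ut t x = deriv (fun s => u s x) t)
    (hηt : ∀ t x, ηt t x = deriv (fun s => η s x) t)
    (hηt0 : ∀ t x, ηt t x ≠ 0)
    (e : ℝ → EuclideanSpace ℝ (Fin 2) → ℝ)
    (he : ∀ t x, e t x = (1 / 2) * ((ut t x) ^ 2 + K x * ‖gradient (u t) x‖ ^ 2))
    (hPDE : ∀ t x, deriv (fun s => ut s x) t
      = div2 (fun y => K y • gradient (u t) y) x) :
    ∀ t x,
      deriv (fun s => η s x * e s x) t
        - div2 (fun y => (η t y * ut t y) • (K y • gradient (u t) y)) x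
        + (K x / (2 * (-(ηt t x))))
            * ‖(ηt t x) • gradient (u t) x - (ut t x) • gradient (η t) x‖ ^ 2
        + (1 / (2 * ηt t x)) * (ut t x) ^ 2
            * (K x * ‖gradient (η t) x‖ ^ 2 - (ηt t x) ^ 2) = 0 :=
  stmt_9_general K hK η u hη hu ut ηt hut hηt hηt0 e he hPDE
end

section
/- Suppose E : [0,∞) → [0,∞) is continuous and satisfies (t − c) E(t) ≤ A₀(t) + γ ∫₀^t E(s) ds for all t ≥ t₀ > c, where c ≥ 0, γ ∈ (0,1), and A₀(t) = α + β√(log t) with α, β ≥ 0. Then E(t) = O(t^{γ−1} √(log t)) as t → ∞. -/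
/-!
Let `F(t) = ∫₀ᵗ E`. On `[t₀, T]` the hypothesis gives `(t - c) F' ≤ a + γ F` with `a = A₀(T)`,
since `A₀` is increasing; equivalently `(t - c)^{-γ} (F + a/γ)` is antitone. Hence
`F(T) ≤ K (T - c)^γ √(log T)` for a constant `K`, and feeding this back into the hypothesis
gives `(t - c) E(t) = O(t^γ √(log t))`, i.e. `E(t) = O(t^{γ-1} √(log t))`.
-/

open MeasureTheory Real Set

section Gronwall

variable {F f : ℝ → ℝ} {a c γ t₀ T : ℝ}

theorem antitoneOn_rpow_neg_mul_add_div (hγ : γ ≠ 0) (hc : c < t₀)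
    (hF : ∀ t ∈ Icc t₀ T, HasDerivAt F (f t) t)
    (hineq : ∀ t ∈ Icc t₀ T, (t - c) * f t ≤ a + γ * F t) :
    AntitoneOn (fun t => (t - c) ^ (-γ) * (F t + a / γ)) (Icc t₀ T) := by
  have hderiv : ∀ t ∈ Icc t₀ T, HasDerivAt (fun t => (t - c) ^ (-γ) * (F t + a / γ))
      ((t - c) ^ (-γ - 1) * ((t - c) * f t - (a + γ * F t))) t := by
    intro t ht
    have hpos : 0 < t - c := by linarith [ht.1]
    refine ((((hasDerivAt_id' t).sub_const c).rpow_const (p := -γ) (Or.inl hpos.ne')).mul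
      ((hF t ht).add_const (a / γ))).congr_deriv ?_
    rw [rpow_sub_one hpos.ne']
    field_simp
    ring
  apply antitoneOn_of_deriv_nonpos (convex_Icc t₀ T)
  · exact fun t ht => (hderiv t ht).continuousAt.continuousWithinAt
  · rw [interior_Icc]
    exact fun t ht => (hderiv t (Ioo_subset_Icc_self ht)).differentiableAt.differentiableWithinAt
  · rw [interior_Icc]
    intro t ht
    rw [(hderiv t (Ioo_subset_Icc_self ht)).deriv]
    have hpos : 0 < t - c := by linarith [ht.1]
    exact mul_nonpos_of_nonneg_of_nonpos (rpow_nonneg hpos.le _)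
      (sub_nonpos.2 (hineq t (Ioo_subset_Icc_self ht)))

theorem le_rpow_mul_of_mul_deriv_le (hγ : 0 < γ) (ha : 0 ≤ a) (hc : c < t₀) (hT : t₀ ≤ T)
    (hF : ∀ t ∈ Icc t₀ T, HasDerivAt F (f t) t)
    (hineq : ∀ t ∈ Icc t₀ T, (t - c) * f t ≤ a + γ * F t) :
    F T ≤ (T - c) ^ γ * ((t₀ - c) ^ (-γ) * (F t₀ + a / γ)) := by
  have hanti := antitoneOn_rpow_neg_mul_add_div hγ.ne' hc hF hineq
    (left_mem_Icc.2 hT) (right_mem_Icc.2 hT) hT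
  have hpos : 0 < T - c := by linarith
  calc F T ≤ F T + a / γ := le_add_of_nonneg_right (div_nonneg ha hγ.le)
    _ = (T - c) ^ γ * ((T - c) ^ (-γ) * (F T + a / γ)) := by
      rw [← mul_assoc, ← rpow_add hpos, add_neg_cancel, rpow_zero, one_mul]
    _ ≤ _ := mul_le_mul_of_nonneg_left hanti (rpow_nonneg hpos.le _)

end Gronwall

theorem hasDerivAt_integral_of_continuousOn_Ici {E : ℝ → ℝ} {a t : ℝ}
    (hE : ContinuousOn E (Ici a)) (ht : a < t) :
    HasDerivAt (fun u => ∫ s in a..u, E s) (E t) t :=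
  intervalIntegral.integral_hasDerivAt_right
    (hE.mono (by rw [uIcc_of_le ht.le]; exact Icc_subset_Ici_self)).intervalIntegrable
    ((hE.mono Ioi_subset_Ici_self).stronglyMeasurableAtFilter isOpen_Ioi t ht)
    (hE.continuousAt (Ici_mem_nhds ht))

theorem le_two_mul_rpow_sub_one_of_sub_mul_le {c t e M γ : ℝ} (ht : 0 < t) (hc : 2 * c ≤ t)
    (he : 0 ≤ e) (h : (t - c) * e ≤ M * t ^ γ) : e ≤ 2 * M * t ^ (γ - 1) := by
  rw [rpow_sub_one ht.ne', ← mul_div_assoc, le_div_iff₀ ht]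
  nlinarith [mul_le_mul_of_nonneg_right (show t / 2 ≤ t - c by linarith) he]

theorem one_le_sqrt_log {t : ℝ} (ht : exp 1 ≤ t) : 1 ≤ √(log t) :=
  one_le_sqrt.2 ((le_log_iff_exp_le ((exp_pos 1).trans_le ht)).2 ht)

/-- the Grönwall-type inequality of Section 4 yields the decay rate
`E(t) = O(t^{γ-1} √(log t))`. -/
theorem stmt_14 (c γ α β t₀ : ℝ) (hc : 0 ≤ c) (hγ : γ ∈ Set.Ioo (0 : ℝ) 1)
    (hα : 0 ≤ α) (hβ : 0 ≤ β) (ht₀ : c < t₀)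
    (E : ℝ → ℝ) (hEcont : ContinuousOn E (Set.Ici (0 : ℝ)))
    (hEnonneg : ∀ t : ℝ, 0 ≤ t → 0 ≤ E t)
    (hineq : ∀ t : ℝ, t₀ ≤ t →
      (t - c) * E t ≤ (α + β * Real.sqrt (Real.log t)) + γ * ∫ s in Set.Ioc (0 : ℝ) t, E s) :
    ∃ C T : ℝ, 0 < C ∧ ∀ t : ℝ, T ≤ t →
      E t ≤ C * t ^ (γ - 1) * Real.sqrt (Real.log t) := by
  obtain ⟨hγ0, -⟩ := hγ
  have ht₀pos : 0 < t₀ := hc.trans_lt ht₀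
  set F : ℝ → ℝ := fun u => ∫ s in (0)..u, E s
  have hEF : ∀ t, t₀ ≤ t → (t - c) * E t ≤ α + β * √(log t) + γ * F t := fun t ht => by
    simpa only [F, intervalIntegral.integral_of_le (ht₀pos.le.trans ht)] using hineq t ht
  have hF₀ : 0 ≤ F t₀ := intervalIntegral.integral_nonneg ht₀pos.le fun s hs => hEnonneg s hs.1
  set K := (t₀ - c) ^ (-γ) * (F t₀ + (α + β) / γ)
  have hK : 0 ≤ K := by positivity
  refine ⟨2 * (α + β + γ * K + 1), max t₀ (max (2 * c) (exp 1)), by positivity, fun t ht => ?_⟩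
  obtain ⟨ht₀t, h2ct, hexpt⟩ : t₀ ≤ t ∧ 2 * c ≤ t ∧ exp 1 ≤ t := by simpa using ht
  have htpos : 0 < t := (exp_pos 1).trans_le hexpt
  have hL := one_le_sqrt_log hexpt
  have hbound : F t₀ + (α + β * √(log t)) / γ ≤ (F t₀ + (α + β) / γ) * √(log t) := by
    rw [add_mul, div_mul_eq_mul_div]
    gcongr
    · exact le_mul_of_one_le_right hF₀ hL
    · nlinarith
  have hFt : F t ≤ K * t ^ γ * √(log t) := calc
    F t ≤ (t - c) ^ γ * ((t₀ - c) ^ (-γ) * (F t₀ + (α + β * √(log t)) / γ)) := by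
      refine le_rpow_mul_of_mul_deriv_le hγ0 (by positivity) ht₀ ht₀t
        (fun s hs => hasDerivAt_integral_of_continuousOn_Ici hEcont (ht₀pos.trans_le hs.1))
        fun s hs => (hEF s hs.1).trans ?_
      have := ht₀pos.trans_le hs.1
      gcongr
      exact hs.2
    _ ≤ t ^ γ * ((t₀ - c) ^ (-γ) * ((F t₀ + (α + β) / γ) * √(log t))) := by
      gcongr <;> linarith
    _ = K * t ^ γ * √(log t) := by ring
  have ht_γ : 1 ≤ t ^ γ := one_le_rpow (by linarith [add_one_le_exp (1 : ℝ)]) hγ0.le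
  have hEt : (t - c) * E t ≤ ((α + β + γ * K + 1) * √(log t)) * t ^ γ := by
    have hLt : 1 ≤ √(log t) * t ^ γ := one_le_mul_of_one_le_of_one_le hL ht_γ
    nlinarith [hEF t ht₀t, mul_le_mul_of_nonneg_left hFt hγ0.le,
      mul_le_mul_of_nonneg_left hLt hα,
      mul_le_mul_of_nonneg_left ht_γ (by positivity : 0 ≤ β * √(log t))]
  exact (le_two_mul_rpow_sub_one_of_sub_mul_le htpos h2ct (hEnonneg t htpos.le) hEt).trans_eq
    (by ring)
end
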